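/- For every n ≥ 1 and every i with 0 ≤ i ≤ x n − 1, the number of survivors of the first n stages of the model sieve that are ≤ x (n+i) equals 1 + i; that is, L n (x (n+i)) = 1 + i. (For i = 0 this says L n (x n) = 1, and for 1 ≤ i ≤ x n − 1 it says that the i-th survivor after 1 in stage n is x (n+i).) -/

import Mathlib

/-- `gx x` is the 0-indexed strictly increasing enumeration of `{k : ℕ | k % x ≠ 1}`. -/
noncomputable def gx (x : ℕ) : ℕ → ℕ := Nat.nth (fun k => k % x ≠ 1)

/-- `modelF n` is the 0-indexed strictly increasing enumeration of the integers surviving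
`n` stages of the model sieve:  `modelF 0 k = k + 1` and
`modelF (n+1) k = modelF n (gx (modelX (n+1)) k)` where `modelX (n+1) = modelF n 1`. -/
noncomputable def modelF : ℕ → ℕ → ℕ
  | 0, k => k + 1
  | n + 1, k => modelF n (gx (modelF n 1) k)

/-- `modelX n` is the `n`-th model prime (`modelX 1 = 2, modelX 2 = 3, modelX 3 = 5, ...`). -/
noncomputable def modelX (n : ℕ) : ℕ := modelF (n - 1) 1

/-- `Lcount n t` is the number of survivors of the first `n` stages of the model sieve
that are `≤ t`. -/
noncomputable def Lcount (n t : ℕ) : ℕ := Set.ncard {k : ℕ | modelF n k ≤ t}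

/-!
Stage `n + 1` deletes the positions `≡ 1 (mod x)` of the stage-`n` survivors, where
`x = modelF n 1`; below `x` that is only position `1`. Hence `modelF (n + 1) k = modelF n (k + 1)`
for `1 ≤ k < modelF n 1`, and iterating, `modelF n (j + 1) = modelF (n + j) 1 = modelX (n + j + 1)`
as long as `j + 1 < modelF n 1`. So the survivors of stage `n` that follow `1` start with the
model primes `x (n + 1), x (n + 2), …`, and counting survivors up to `x (n + i)` amounts to reading
off an index of the strictly increasing enumeration `modelF n`.
-/

theorem StrictMono.ncard_setOf_le_eq {α : Type*} [LinearOrder α] {f : ℕ → α} (hf : StrictMono f)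
    {j : ℕ} {t : α} (hj : f j ≤ t) (ht : t < f (j + 1)) : {k | f k ≤ t}.ncard = j + 1 := by
  have hset : {k | f k ≤ t} = Set.Iic j := by
    ext k
    refine ⟨fun hk => ?_, fun hk => (hf.monotone hk).trans hj⟩
    by_contra hkj
    exact (ht.trans_le (hf.monotone (Nat.succ_le_of_lt (not_le.mp hkj)))).not_ge hk
  rw [hset, Set.ncard_Iic_nat]

theorem gx_zero (x : ℕ) : gx x 0 = 0 :=
  Nat.nth_zero_of_zero (by simp)

theorem gx_strictMono {x : ℕ} (hx : x ≠ 0) : StrictMono (gx x) := by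
  refine Nat.nth_strictMono (Set.infinite_of_injective_forall_mem (mul_right_injective₀ hx) ?_)
  intro a
  show x * a % x ≠ 1
  simp

theorem gx_of_lt {x i : ℕ} (hi : 1 ≤ i) (hix : i < x) : gx x i = i + 1 := by
  have hcount : Nat.count (fun k => k % x ≠ 1) (i + 1) = i := by
    rw [Nat.count_eq_card_filter_range]
    have hfilter : {k ∈ Finset.range (i + 1) | k % x ≠ 1} = (Finset.range (i + 1)).erase 1 := by
      ext k
      simp only [Finset.mem_filter, Finset.mem_range, Finset.mem_erase]
      constructor
      · rintro ⟨hk, hkx⟩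
        exact ⟨fun h => hkx (by rw [h, Nat.mod_eq_of_lt (by omega)]), hk⟩
      · rintro ⟨hk1, hk⟩
        exact ⟨hk, by rwa [Nat.mod_eq_of_lt (by omega)]⟩
    rw [hfilter, Finset.card_erase_of_mem (by simp; omega), Finset.card_range, Nat.add_sub_cancel]
  have hmem : (i + 1) % x ≠ 1 := by
    obtain h | h : i + 1 < x ∨ i + 1 = x := by omega
    · rw [Nat.mod_eq_of_lt h]; omega
    · rw [h, Nat.mod_self]; omega
  simpa [gx, hcount] using Nat.nth_count (p := fun k => k % x ≠ 1) hmem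

theorem modelF_zero (n : ℕ) : modelF n 0 = 1 := by
  induction n with
  | zero => rfl
  | succ n ih => rw [modelF, gx_zero, ih]

theorem modelF_succ_of_lt {n k : ℕ} (hk : 1 ≤ k) (hkn : k < modelF n 1) :
    modelF (n + 1) k = modelF n (k + 1) := by
  rw [modelF, gx_of_lt hk hkn]

theorem modelF_strictMono (n : ℕ) : StrictMono (modelF n) := by
  induction n with
  | zero => exact fun a b h => Nat.succ_lt_succ h
  | succ n ih =>
    have hx : modelF n 1 ≠ 0 := (ih.imp Nat.zero_lt_one).ne_bot
    exact ih.comp (gx_strictMono hx)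

theorem one_lt_modelF_one (n : ℕ) : 1 < modelF n 1 := by
  simpa [modelF_zero] using modelF_strictMono n Nat.zero_lt_one

theorem modelF_one_lt_modelF_succ_one (n : ℕ) : modelF n 1 < modelF (n + 1) 1 := by
  rw [modelF_succ_of_lt le_rfl (one_lt_modelF_one n)]
  exact modelF_strictMono n one_lt_two

theorem modelF_add_one_eq {n j : ℕ} (hj : j + 1 < modelF n 1) :
    modelF n (j + 1) = modelF (n + j) 1 := by
  induction j generalizing n with
  | zero => rfl
  | succ j ih =>
    have hj' : j + 1 < modelF (n + 1) 1 := by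
      have := modelF_one_lt_modelF_succ_one n
      omega
    rw [← modelF_succ_of_lt (k := j + 1) (by omega) (by omega), ih hj', Nat.add_right_comm,
      Nat.add_assoc]

theorem modelX_succ (n : ℕ) : modelX (n + 1) = modelF n 1 := rfl

/-- For every `n ≥ 1` and `0 ≤ i ≤ x n - 1`, the number of survivors of the first `n`
stages of the model sieve that are `≤ x (n+i)` equals `1 + i`. -/
theorem model_sieve_count_at_later_primes (n : ℕ) (hn : 1 ≤ n) (i : ℕ)
    (hi : i ≤ modelX n - 1) :
    Lcount n (modelX (n + i)) = 1 + i := by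
  obtain ⟨m, rfl⟩ : ∃ m, n = m + 1 := ⟨n - 1, by omega⟩
  have hmono := modelF_strictMono (m + 1)
  have hgrow := modelF_one_lt_modelF_succ_one m
  have hix : i < modelF m 1 := by
    have := one_lt_modelF_one m
    rw [modelX_succ] at hi
    omega
  rw [add_right_comm, modelX_succ, add_comm 1 i, Lcount]
  rcases i with _ | j
  · refine hmono.ncard_setOf_le_eq ?_ hgrow
    rw [modelF_zero]
    exact (one_lt_modelF_one m).le
  · have hj : modelF (m + 1) (j + 1) = modelF (m + (j + 1)) 1 := by
      rw [modelF_add_one_eq (by omega), Nat.add_right_comm, Nat.add_assoc]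
    exact hmono.ncard_setOf_le_eq hj.le (hj ▸ hmono (Nat.lt_succ_self _))
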